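/- Existence of a best-fit rigid motion: let E = EuclideanSpace ℝ (Fin 3). For any n ≥ 1 and any point clouds P Q : Fin n → E, there exists a rigid motion T of E such that for every rigid motion T' of E, ∑_{i} ‖T (P i) − Q i‖² ≤ ∑_{i} ‖T' (P i) − Q i‖². (The registration objective attains its infimum over the group of rigid motions.) -/
import Mathlib

open scoped BigOperators

noncomputable section

/-- The Euclidean space `ℝ³`. -/
abbrev E : Type := EuclideanSpace ℝ (Fin 3)

/-- The registration cost of a rigid motion `T` for point clouds `P, Q`. -/
def regCost {n : ℕ} (P Q : Fin n → E) (T : E ≃ᵃⁱ[ℝ] E) : ℝ :=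
  ∑ i : Fin n, ‖T (P i) - Q i‖ ^ 2

/-- **Existence of a best-fit rigid motion.** For any `n ≥ 1` and point clouds
`P Q : Fin n → E`, the registration objective attains its infimum over the group of
rigid motions of `E`. -/
theorem exists_bestFit {n : ℕ} (hn : 1 ≤ n) (P Q : Fin n → E) :
    ∃ T : E ≃ᵃⁱ[ℝ] E, ∀ T' : E ≃ᵃⁱ[ℝ] E, regCost P Q T ≤ regCost P Q T' := by
  classical
  set i0 : Fin n := ⟨0, hn⟩
  set C0 : ℝ := regCost P Q (AffineIsometryEquiv.refl ℝ E) with hC0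
  have hC0nonneg : 0 ≤ C0 := Finset.sum_nonneg fun i _ => by positivity
  set R : ℝ := ‖P i0‖ + ‖Q i0‖ + Real.sqrt C0 with hR
  have hRnonneg : 0 ≤ R := by positivity
  set f : (E →L[ℝ] E) × E → ℝ := fun p => ∑ i : Fin n, ‖p.1 (P i) + p.2 - Q i‖ ^ 2 with hf
  have hfc : Continuous f := by
    apply continuous_finset_sum
    intro i _
    have h1 : Continuous fun p : (E →L[ℝ] E) × E => p.1 (P i) :=
      (ContinuousLinearMap.apply ℝ E (P i)).continuous.comp continuous_fst
    exact ((h1.add continuous_snd).sub continuous_const).norm.pow 2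
  set K1 : Set (E →L[ℝ] E) := {A | ∀ x, ‖A x‖ = ‖x‖} with hK1
  have hK1closed : IsClosed K1 := by
    have : K1 = ⋂ x : E, {A : E →L[ℝ] E | ‖A x‖ = ‖x‖} := by
      ext A; simp [hK1]
    rw [this]
    exact isClosed_iInter fun x =>
      isClosed_eq ((ContinuousLinearMap.apply ℝ E x).continuous.norm) continuous_const
  have hK1bdd : Bornology.IsBounded K1 := by
    apply (Metric.isBounded_closedBall (x := (0 : E →L[ℝ] E)) (r := 1)).subset
    intro A hA
    simp only [Metric.mem_closedBall, dist_zero_right]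
    exact A.opNorm_le_bound zero_le_one fun x => by rw [hA x, one_mul]
  have hK1cpt : IsCompact K1 := Metric.isCompact_of_isClosed_isBounded hK1closed hK1bdd
  set K : Set ((E →L[ℝ] E) × E) := K1 ×ˢ Metric.closedBall (0 : E) R with hK
  have hKcpt : IsCompact K := hK1cpt.prod (isCompact_closedBall 0 R)
  have hmem1 : ((1 : E →L[ℝ] E), (0 : E)) ∈ K := by
    constructor
    · intro x; simp
    · simpa using hRnonneg
  obtain ⟨⟨A, t⟩, hmemK, hmin⟩ := hKcpt.exists_isMinOn ⟨_, hmem1⟩ hfc.continuousOn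
  -- build the rigid motion from (A, t)
  set li : E →ₗᵢ[ℝ] E := ⟨A.toLinearMap, hmemK.1⟩ with hli
  set L : E ≃ₗᵢ[ℝ] E := li.toLinearIsometryEquiv rfl with hL
  have hLA : ∀ x, L x = A x := fun x => rfl
  set T : E ≃ᵃⁱ[ℝ] E :=
    L.toAffineIsometryEquiv.trans (AffineIsometryEquiv.constVAdd ℝ E t) with hT
  have hTval : ∀ x, T x = A x + t := by
    intro x
    simp [hT, AffineIsometryEquiv.coe_trans, LinearIsometryEquiv.coe_toAffineIsometryEquiv,
      AffineIsometryEquiv.coe_constVAdd, vadd_eq_add, hLA x, add_comm]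
  have hTcost : regCost P Q T = f (A, t) := by
    unfold regCost
    simp only [hf]
    exact Finset.sum_congr rfl fun i _ => by rw [hTval (P i)]
  -- decomposition of an arbitrary rigid motion
  have hdec : ∀ (T' : E ≃ᵃⁱ[ℝ] E) (x : E),
      T' x = T'.linearIsometryEquiv x + T' 0 := by
    intro T' x
    have := T'.map_vadd (0 : E) x
    simpa [vadd_eq_add] using this
  have hminval : f (A, t) ≤ C0 := by
    have := hmin hmem1
    simpa [hf, hC0, regCost] using this
  refine ⟨T, fun T' => ?_⟩
  rw [hTcost]
  set L' := T'.linearIsometryEquiv with hL'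
  set A' : E →L[ℝ] E := L'.toLinearIsometry.toContinuousLinearMap with hA'
  set t' : E := T' 0 with ht'
  have hcost' : regCost P Q T' = f (A', t') := by
    unfold regCost
    exact Finset.sum_congr rfl fun i _ => by rw [hdec T' (P i)]; rfl
  rw [hcost']
  by_cases hball : t' ∈ Metric.closedBall (0 : E) R
  · exact hmin (Set.mk_mem_prod (fun x => L'.norm_map x) hball)
  · -- translation too large: cost exceeds C0
    refine hminval.trans ?_
    have hterm : ‖A' (P i0) + t' - Q i0‖ ^ 2 ≤ f (A', t') := by
      have := Finset.single_le_sum (f := fun i => ‖A' (P i) + t' - Q i‖ ^ 2)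
        (fun i _ => by positivity) (Finset.mem_univ i0)
      simpa [hf] using this
    refine le_trans ?_ hterm
    have hAnorm : ‖A' (P i0)‖ = ‖P i0‖ := L'.norm_map _
    have ht'big : R < ‖t'‖ := by
      simpa [Metric.mem_closedBall, dist_zero_right] using hball
    have hlow : Real.sqrt C0 ≤ ‖A' (P i0) + t' - Q i0‖ := by
      have h1 : ‖t'‖ ≤ ‖A' (P i0) + t' - Q i0‖ + (‖P i0‖ + ‖Q i0‖) := by
        have key : t' = (A' (P i0) + t' - Q i0) + (Q i0 - A' (P i0)) := by abel
        calc ‖t'‖ = ‖(A' (P i0) + t' - Q i0) + (Q i0 - A' (P i0))‖ := by rw [← key]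
          _ ≤ ‖A' (P i0) + t' - Q i0‖ + ‖Q i0 - A' (P i0)‖ := norm_add_le _ _
          _ ≤ _ := by
              have := norm_sub_le (Q i0) (A' (P i0))
              rw [hAnorm] at this; linarith
      have h2 := ht'big
      rw [hR] at h2
      linarith
    calc C0 = Real.sqrt C0 ^ 2 := (Real.sq_sqrt hC0nonneg).symm
      _ ≤ ‖A' (P i0) + t' - Q i0‖ ^ 2 := by
          apply pow_le_pow_left₀ (Real.sqrt_nonneg _) hlow

end
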